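/- arXiv:1710.09109 — 2 statements merged into one kernel-verified Lean document; each statement's English description precedes it below -/
import Mathlib

section
/- Let X, H be real normed spaces, F : X → ℝ twice differentiable, G : X → ℝ convex, α > 0, z : X → H linear continuous, δ > 0, τ > 0, C₂ ≥ 0. Suppose ū satisfies F'(ū)v + αG'(ū;v) ≥ 0 for all v, and for some u with v := u − ū: F'(ū)v + αG'(ū;v) > τ‖z(v)‖, ‖z(v)‖ ≤ 2τ/(δ+C₂), and F''(ū+θv)v² ≥ −C₂‖z(v)‖² for all θ ∈ [0,1]. Then using the Taylor expansion J(u) − J(ū) ≥ [F'(ū)v + αG'(ū;v)] + ½F''(ū+θv)v² for some θ ∈ (0,1), one obtains J(u) − J(ū) ≥ (δ/2)‖z(v)‖², where J = F + αG. -/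
theorem half_mul_sq_le_mul_of_le_two_mul_div {c n τ : ℝ} (hc : 0 < c) (hn : 0 ≤ n)
    (h : n ≤ 2 * τ / c) : c / 2 * n ^ 2 ≤ τ * n := by
  have hlin : c / 2 * n ≤ τ := by
    rw [le_div_iff₀ hc] at h
    linarith
  calc c / 2 * n ^ 2 = (c / 2 * n) * n := by ring
    _ ≤ τ * n := mul_le_mul_of_nonneg_right hlin hn

theorem stmt12_general {X H : Type*} [NormedAddCommGroup X] [NormedSpace ℝ X]
    [NormedAddCommGroup H] [NormedSpace ℝ H]
    (F G : X → ℝ) (α δ τ C₂ : ℝ) (hδ : 0 < δ) (hC₂ : 0 ≤ C₂)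
    (F' : X →L[ℝ] ℝ) (G' : X → ℝ) (F'' : X → X → ℝ) (z : X →L[ℝ] H)
    (ubar u : X)
    (hcase : F' (u - ubar) + α * G' (u - ubar) > τ * ‖z (u - ubar)‖)
    (hsmall : ‖z (u - ubar)‖ ≤ 2 * τ / (δ + C₂))
    (hF'' : ∀ θ ∈ Set.Icc (0 : ℝ) 1,
      F'' (ubar + θ • (u - ubar)) (u - ubar) ≥ -C₂ * ‖z (u - ubar)‖ ^ 2)
    (hTaylor : ∃ θ ∈ Set.Ioo (0 : ℝ) 1,
      (F u + α * G u) - (F ubar + α * G ubar) ≥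
        (F' (u - ubar) + α * G' (u - ubar)) +
          (1 / 2) * F'' (ubar + θ • (u - ubar)) (u - ubar)) :
    (F u + α * G u) - (F ubar + α * G ubar) ≥ (δ / 2) * ‖z (u - ubar)‖ ^ 2 := by
  obtain ⟨θ, hθ, hexpand⟩ := hTaylor
  have hcurv := hF'' θ (Set.Ioo_subset_Icc_self hθ)
  have hquad := half_mul_sq_le_mul_of_le_two_mul_div (by positivity) (norm_nonneg _) hsmall
  linarith

/-- Case II estimate in the proof of the second-order sufficient condition (Theorem 5.2):
if `ū` satisfies the first-order inequality, `v = u − ū` satisfies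
`F'(ū)v + αG'(ū;v) > τ‖z(v)‖`, `‖z(v)‖ ≤ 2τ/(δ+C₂)`, and
`F''(ū+θv)v² ≥ −C₂‖z(v)‖²` for all `θ ∈ [0,1]`, then from the Taylor expansion
`J(u) − J(ū) ≥ [F'(ū)v + αG'(ū;v)] + ½F''(ū+θv)v²` (some `θ ∈ (0,1)`) one obtains
`J(u) − J(ū) ≥ (δ/2)‖z(v)‖²`, where `J = F + αG`. -/
theorem stmt12 {X H : Type*} [NormedAddCommGroup X] [NormedSpace ℝ X]
    [NormedAddCommGroup H] [NormedSpace ℝ H]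
    (F G : X → ℝ) (α δ τ C₂ : ℝ) (hα : 0 < α) (hδ : 0 < δ) (hτ : 0 < τ) (hC₂ : 0 ≤ C₂)
    (F' : X →L[ℝ] ℝ) (G' : X → ℝ) (F'' : X → X → ℝ) (z : X →L[ℝ] H)
    (ubar u : X)
    (hfo : ∀ w : X, 0 ≤ F' w + α * G' w)
    (hcase : F' (u - ubar) + α * G' (u - ubar) > τ * ‖z (u - ubar)‖)
    (hsmall : ‖z (u - ubar)‖ ≤ 2 * τ / (δ + C₂))
    (hF'' : ∀ θ ∈ Set.Icc (0 : ℝ) 1,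
      F'' (ubar + θ • (u - ubar)) (u - ubar) ≥ -C₂ * ‖z (u - ubar)‖ ^ 2)
    (hTaylor : ∃ θ ∈ Set.Ioo (0 : ℝ) 1,
      (F u + α * G u) - (F ubar + α * G ubar) ≥
        (F' (u - ubar) + α * G' (u - ubar)) +
          (1 / 2) * F'' (ubar + θ • (u - ubar)) (u - ubar)) :
    (F u + α * G u) - (F ubar + α * G ubar) ≥ (δ / 2) * ‖z (u - ubar)‖ ^ 2 :=
  stmt12_general F G α δ τ C₂ hδ hC₂ F' G' F'' z ubar u hcase hsmall hF'' hTaylor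
end

section
/- Let H₁, H₂ be real Hilbert spaces, F : H₁ → ℝ twice differentiable, G convex, α > 0, δ > 0. Suppose ū satisfies F'(ū)v + αG'(ū;v) ≥ 0 for all v ∈ H₁, and for some u with v = u − ū and some θ ∈ [0,1] admissible in the Taylor formula: F''(ū)v² ≥ δ‖v‖², |[F''(ū+θv) − F''(ū)]v²| ≤ (δ/2)‖v‖². Then J(u) ≥ J(ū) + (δ/4)‖u − ū‖², where J = F + αG and the Taylor expansion J(u) − J(ū) ≥ F'(ū)v + αG'(ū;v) + ½F''(ū+θv)v² holds. -/
theorem stmt13_general {H₁ : Type*}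
    [NormedAddCommGroup H₁] [InnerProductSpace ℝ H₁]
    (F G : H₁ → ℝ) (α δ : ℝ)
    (F' : H₁ →L[ℝ] ℝ) (G' : H₁ → ℝ) (F'' : H₁ → H₁ → ℝ)
    (ubar u : H₁)
    (hfo : ∀ w : H₁, 0 ≤ F' w + α * G' w)
    (hδ2 : F'' ubar (u - ubar) ≥ δ * ‖u - ubar‖ ^ 2)
    (hTaylor : ∃ θ ∈ Set.Icc (0 : ℝ) 1,
      (|F'' (ubar + θ • (u - ubar)) (u - ubar) - F'' ubar (u - ubar)| ≤
        (δ / 2) * ‖u - ubar‖ ^ 2) ∧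
      (F u + α * G u) - (F ubar + α * G ubar) ≥
        (F' (u - ubar) + α * G' (u - ubar)) +
          (1 / 2) * F'' (ubar + θ • (u - ubar)) (u - ubar)) :
    F u + α * G u ≥ (F ubar + α * G ubar) + (δ / 4) * ‖u - ubar‖ ^ 2 := by
  obtain ⟨θ, -, hpert, hexpand⟩ := hTaylor
  set v := u - ubar
  have hcurv : (δ / 2) * ‖v‖ ^ 2 ≤ F'' (ubar + θ • v) v := by
    linarith [(abs_sub_le_iff.mp hpert).2]
  linarith [hfo v]

/-- Quadratic growth estimate (5.19) in the proof of Theorem 5.3: if `ū` satisfies the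
first-order inequality, `F''(ū)v² ≥ δ‖v‖²` for `v = u − ū`, and for some `θ ∈ [0,1]`
admissible in the Taylor formula `|[F''(ū+θv) − F''(ū)]v²| ≤ (δ/2)‖v‖²`, then
`J(u) ≥ J(ū) + (δ/4)‖u − ū‖²` with `J = F + αG`. -/
theorem stmt13 {H₁ H₂ : Type*}
    [NormedAddCommGroup H₁] [InnerProductSpace ℝ H₁] [CompleteSpace H₁]
    [NormedAddCommGroup H₂] [InnerProductSpace ℝ H₂] [CompleteSpace H₂]
    (F G : H₁ → ℝ) (α δ : ℝ) (hα : 0 < α) (hδ : 0 < δ)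
    (F' : H₁ →L[ℝ] ℝ) (G' : H₁ → ℝ) (F'' : H₁ → H₁ → ℝ)
    (ubar u : H₁)
    (hfo : ∀ w : H₁, 0 ≤ F' w + α * G' w)
    (hδ2 : F'' ubar (u - ubar) ≥ δ * ‖u - ubar‖ ^ 2)
    (hTaylor : ∃ θ ∈ Set.Icc (0 : ℝ) 1,
      (|F'' (ubar + θ • (u - ubar)) (u - ubar) - F'' ubar (u - ubar)| ≤
        (δ / 2) * ‖u - ubar‖ ^ 2) ∧
      (F u + α * G u) - (F ubar + α * G ubar) ≥
        (F' (u - ubar) + α * G' (u - ubar)) +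
          (1 / 2) * F'' (ubar + θ • (u - ubar)) (u - ubar)) :
    F u + α * G u ≥ (F ubar + α * G ubar) + (δ / 4) * ‖u - ubar‖ ^ 2 :=
  stmt13_general F G α δ F' G' F'' ubar u hfo hδ2 hTaylor
end
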